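/- For any program P and finite consistent set of facts D, the following are equivalent: (1) there is a fact-set step sequence from ∅ to D and D is saturated (every S with D →_P S equals {D}), i.e. D is a solution of P; (2) the promotion (D)⁺ belongs to lfp T_P* and (D)⁺ is finite (equivalently, there is Δ ∈ lfp T_P* that is positive and finite with D = (Δ)⁻). -/

import Mathlib

open scoped Classical

namespace FCLP

/-! ### Terms -/

/-- Ground (Herbrand) terms: uninterpreted function symbols applied to ground terms. -/
inductive GTerm : Type where
  | func : ℕ → List GTerm → GTerm

/-- Terms possibly containing variables. -/
inductive VTerm : Type where
  | var : ℕ → VTerm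
  | func : ℕ → List VTerm → VTerm

/-- A substitution is a total map from variables to ground terms. -/
abbrev Subst := ℕ → GTerm

mutual
  /-- Applying a substitution to a term. -/
  def VTerm.subst (σ : Subst) : VTerm → GTerm
    | .var x => σ x
    | .func f args => .func f (VTerm.substList σ args)
  def VTerm.substList (σ : Subst) : List VTerm → List GTerm
    | [] => []
    | t :: ts => VTerm.subst σ t :: VTerm.substList σ ts
end

/-- The variable `x` occurs in the term. -/
inductive VTerm.HasVar : VTerm → ℕ → Prop where
  | var (x : ℕ) : VTerm.HasVar (.var x) x
  | func {f : ℕ} {args : List VTerm} {t : VTerm} {x : ℕ} :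
      t ∈ args → VTerm.HasVar t x → VTerm.HasVar (.func f args) x

/-! ### Attributes, facts, rules, programs -/

/-- An attribute `p(t₁,...,tₙ)`: a predicate applied to ground terms. -/
structure Attr where
  pred : ℕ
  args : List GTerm

/-- A fact `p(t̄) is v`. -/
structure Fact where
  attr : Attr
  value : GTerm

/-- A premise `p(t̄) is v`, possibly containing variables. -/
structure VAtom where
  pred : ℕ
  args : List VTerm
  value : VTerm

def VAtom.subst (σ : Subst) (A : VAtom) : Fact :=
  ⟨⟨A.pred, A.args.map (VTerm.subst σ)⟩, A.value.subst σ⟩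

def VAtom.HasVar (A : VAtom) (x : ℕ) : Prop :=
  (∃ t ∈ A.args, t.HasVar x) ∨ A.value.HasVar x

/-- A rule head: open `p(t̄) is? v` or closed `p(t̄) is {v₁,...,vₘ}`. -/
inductive Head : Type where
  | opn : ℕ → List VTerm → VTerm → Head
  | closed : ℕ → List VTerm → List VTerm → Head

def Head.HasVar : Head → ℕ → Prop
  | .opn _ args v, x => (∃ t ∈ args, t.HasVar x) ∨ v.HasVar x
  | .closed _ args vs, x => (∃ t ∈ args, t.HasVar x) ∨ ∃ v ∈ vs, v.HasVar x

/-- The ground attribute of a rule head under a substitution. -/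
def Head.groundAttr (σ : Subst) : Head → Attr
  | .opn p args _ => ⟨p, args.map (VTerm.subst σ)⟩
  | .closed p args _ => ⟨p, args.map (VTerm.subst σ)⟩

/-- A rule `H ← F` with a finite collection of premises. -/
structure Rule where
  head : Head
  prems : List VAtom

/-- Wellformedness: closed heads offer at least one value, and every
variable in the head occurs in a premise. -/
def Rule.WF (r : Rule) : Prop :=
  (∀ x, r.head.HasVar x → ∃ A ∈ r.prems, A.HasVar x) ∧
  (∀ p args vs, r.head = .closed p args vs → vs ≠ [])

/-- A program is a set of rules. -/
abbrev Program := Set Rule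

/-- A program is a *finite* set of *wellformed* rules. -/
def Program.WFP (P : Program) : Prop := P.Finite ∧ ∀ r ∈ P, r.WF

/-! ### Fact-set semantics -/

/-- A set of facts is consistent when each attribute has at most one value. -/
def Consistent (D : Set Fact) : Prop :=
  ∀ f ∈ D, ∀ g ∈ D, f.attr = g.attr → f = g

/-- `σ` satisfies the premises `F` in the fact-set database `D`. -/
def satF (σ : Subst) (F : List VAtom) (D : Set Fact) : Prop :=
  ∀ A ∈ F, A.subst σ ∈ D

/-- Fact-set evolution `D →_P S`. -/
inductive Evolve (P : Program) : Set Fact → Set (Set Fact) → Prop where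
  | triv (D : Set Fact) : Evolve P D {D}
  | closed {D : Set Fact} {r : Rule} {p : ℕ} {args vs : List VTerm} {σ : Subst} :
      r ∈ P → r.head = .closed p args vs → satF σ r.prems D →
      Evolve P D
        { E | ∃ v ∈ vs,
            E = insert (⟨⟨p, args.map (VTerm.subst σ)⟩, VTerm.subst σ v⟩ : Fact) D ∧
            Consistent E }
  | opn {D : Set Fact} {r : Rule} {p : ℕ} {args : List VTerm} {v : VTerm} {σ : Subst} :
      r ∈ P → r.head = .opn p args v → satF σ r.prems D →
      Evolve P D
        ({D} ∪ { E | E = insert (⟨⟨p, args.map (VTerm.subst σ)⟩, VTerm.subst σ v⟩ : Fact) D ∧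
                     Consistent E })

/-- `P` allows `D` to step to `D'`. -/
def Step (P : Program) (D D' : Set Fact) : Prop := ∃ S, Evolve P D S ∧ D' ∈ S

/-- A database is saturated when its only evolution is the singleton of itself. -/
def Saturated (P : Program) (D : Set Fact) : Prop := ∀ S, Evolve P D S → S = {D}

/-- A solution: a saturated database reachable from `∅` by a (finite) step sequence. -/
def Solution (P : Program) (D : Set Fact) : Prop :=
  Relation.ReflTransGen (Step P) ∅ D ∧ Saturated P D

/-! ### Constraints and constraint databases -/

/-- A constraint: `just t` or `noneOf X`. -/
inductive Constraint : Type where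
  | just : GTerm → Constraint
  | noneOf : Set GTerm → Constraint

/-- The order on constraints. -/
def Constraint.le : Constraint → Constraint → Prop
  | .noneOf X, .noneOf Y => X ⊆ Y
  | .noneOf X, .just t => t ∉ X
  | .just t, .just t' => t = t'
  | .just _, .noneOf _ => False

instance : LE Constraint := ⟨Constraint.le⟩

/-- Least upper bound of a (compatible) set of constraints: if some `just t` is present
it is the lub; otherwise it is `noneOf` of the union. -/
noncomputable def Constraint.lub (C : Set Constraint) : Constraint :=
  if h : ∃ t, Constraint.just t ∈ C then .just h.choose
  else .noneOf (⋃₀ { X | Constraint.noneOf X ∈ C })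

/-- A constraint database: a map from ground attributes to constraints,
ordered pointwise (via the `Pi` order). -/
abbrev CDB := Attr → Constraint

/-- The least constraint database: every attribute maps to `noneOf ∅`. -/
def cdbBot : CDB := fun _ => .noneOf ∅

/-- Pointwise least upper bound of a (compatible) set of constraint databases. -/
noncomputable def CDB.lub (S : Set CDB) : CDB :=
  fun a => Constraint.lub ((fun Δ => Δ a) '' S)

/-- A subset of a poset is compatible when it has an upper bound. -/
def Compatible {α : Type*} [LE α] (X : Set α) : Prop := ∃ y, ∀ x ∈ X, x ≤ y

/-- Binary compatibility. -/
def Compat {α : Type*} [LE α] (x y : α) : Prop := Compatible ({x, y} : Set α)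

/-- A choice set: a pairwise-incompatible set of constraint databases. -/
def IsChoiceSet (𝒞 : Set CDB) : Prop :=
  ∀ D ∈ 𝒞, ∀ E ∈ 𝒞, Compat D E → D = E

/-- The order on choice sets. -/
def ChoiceLE (𝒞₁ 𝒞₂ : Set CDB) : Prop :=
  ∀ D₂ ∈ 𝒞₂, ∃ D₁ ∈ 𝒞₁, D₁ ≤ D₂

/-- Least upper bound of an indexed family of choice sets:
`⋁ᵢ 𝒞ᵢ = { ⋁ Im(f) : f ∈ ∏ᵢ 𝒞ᵢ, Im(f) compatible }`. -/
noncomputable def ChoiceJoin {I : Type*} (𝒞 : I → Set CDB) : Set CDB :=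
  { E | ∃ f : I → CDB, (∀ i, f i ∈ 𝒞 i) ∧ Compatible (Set.range f) ∧
        E = CDB.lub (Set.range f) }

/-- Least upper bound of a set of choice sets. -/
noncomputable def ChoiceSJoin (S : Set (Set CDB)) : Set CDB :=
  ChoiceJoin (fun C : S => (C : Set CDB))

/-- Greatest lower bound of a set of choice sets:
`⋀ X = ⋁ {𝒞 : ∀ x ∈ X, 𝒞 ≤ x}` (join over choice-set lower bounds). -/
noncomputable def ChoiceMeet (S : Set (Set CDB)) : Set CDB :=
  ChoiceSJoin { C | IsChoiceSet C ∧ ∀ X ∈ S, ChoiceLE C X }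

/-! ### Immediate consequence -/

/-- `σ` satisfies `F` in the constraint database `Δ`. -/
def satC (σ : Subst) (F : List VAtom) (Δ : CDB) : Prop :=
  ∀ A ∈ F, Constraint.just (A.value.subst σ) ≤ Δ ⟨A.pred, A.args.map (VTerm.subst σ)⟩

/-- The constraint database mapping `a` to `c` and every other attribute to `noneOf ∅`. -/
noncomputable def unitCDB (a : Attr) (c : Constraint) : CDB :=
  fun a' => if a' = a then c else .noneOf ∅

/-- The choice set `⟨σH⟩` determined by a ground rule head. -/
noncomputable def headChoice (σ : Subst) : Head → Set CDB
  | .opn p args v =>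
      { unitCDB ⟨p, args.map (VTerm.subst σ)⟩ (.just (v.subst σ)),
        unitCDB ⟨p, args.map (VTerm.subst σ)⟩ (.noneOf {v.subst σ}) }
  | .closed p args vs =>
      { Δ | ∃ v ∈ vs, Δ = unitCDB ⟨p, args.map (VTerm.subst σ)⟩ (.just (v.subst σ)) }

/-- The immediate consequence operator
`T_P(Δ) = {Δ} ∨ ⋁{ ⟨σH⟩ : (H ← F) ∈ P, σ satisfies F in Δ }`. -/
noncomputable def TP (P : Program) (Δ : CDB) : Set CDB :=
  ChoiceSJoin
    (insert {Δ} { C | ∃ r ∈ P, ∃ σ : Subst, satC σ r.prems Δ ∧ C = headChoice σ r.head })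

/-- The attribute-specific immediate consequence operator `T_{P[a]}`. -/
noncomputable def TPa (P : Program) (a : Attr) (Δ : CDB) : Set CDB :=
  ChoiceSJoin
    { C | ∃ r ∈ P, ∃ σ : Subst, satC σ r.prems Δ ∧ r.head.groundAttr σ = a ∧
          C = headChoice σ r.head }

/-- The lifted immediate consequence operator `T_P*(𝒞) = ⋃_{Δ ∈ 𝒞} T_P(Δ)`. -/
noncomputable def TPs (P : Program) (𝒞 : Set CDB) : Set CDB :=
  { E | ∃ Δ ∈ 𝒞, E ∈ TP P Δ }

/-- The least fixed point of `T_P*`, defined à la Knaster–Tarski as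
`⋀ {𝒞 : T_P*(𝒞) ≤ 𝒞}`. -/
noncomputable def lfpTPs (P : Program) : Set CDB :=
  ChoiceMeet { C | IsChoiceSet C ∧ ChoiceLE (TPs P C) C }

/-! ### Positive and finite constraint databases, promotion and erasure -/

/-- A constraint database is positive when `noneOf X` only occurs with `X = ∅`. -/
def CDBPositive (Δ : CDB) : Prop := ∀ a X, Δ a = .noneOf X → X = ∅

/-- A constraint database is finite. -/
def CDBFinite (Δ : CDB) : Prop :=
  { a | Δ a ≠ .noneOf ∅ }.Finite ∧ ∀ a X, Δ a = .noneOf X → X.Finite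

/-- Promotion of a (consistent) fact set to a constraint database. -/
noncomputable def promote (D : Set Fact) : CDB :=
  fun a => if h : ∃ v, (⟨a, v⟩ : Fact) ∈ D then .just h.choose else .noneOf ∅

/-- Erasure of a constraint database to a fact set. -/
def eraseCDB (Δ : CDB) : Set Fact := { f | Δ f.attr = .just f.value }

/-! ### The abstract algorithm -/

/-- `P` allows `Δ` to take an algorithmic step to any `Δ' ∈ {Δ} ∨ T_{P[a]}(Δ)`
for some attribute `a`, provided `T_P(Δ) ≠ ∅`. -/
noncomputable def AlgStep (P : Program) (Δ Δ' : CDB) : Prop :=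
  TP P Δ ≠ ∅ ∧ ∃ a : Attr, Δ' ∈ ChoiceSJoin {({Δ} : Set CDB), TPa P a Δ}

/-! ### Datalog -/

/-- A datalog atom, possibly with variables. -/
structure DAtom where
  pred : ℕ
  args : List VTerm

/-- A ground datalog atom. -/
structure GAtom where
  pred : ℕ
  args : List GTerm

def DAtom.subst (σ : Subst) (A : DAtom) : GAtom := ⟨A.pred, A.args.map (VTerm.subst σ)⟩

/-- A datalog rule `p(t̄) ← p₁(t̄₁), ..., pₙ(t̄ₙ)`. -/
structure DRule where
  head : DAtom
  prems : List DAtom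

/-- Every variable of the head appears in a premise. -/
def DRule.WF (r : DRule) : Prop :=
  ∀ x, (∃ t ∈ r.head.args, t.HasVar x) → ∃ A ∈ r.prems, ∃ t ∈ A.args, t.HasVar x

/-- The datalog immediate consequence operator. -/
def dImmCons (P : Set DRule) (X : Set GAtom) : Set GAtom :=
  { g | ∃ r ∈ P, ∃ σ : Subst, (∀ A ∈ r.prems, A.subst σ ∈ X) ∧ g = r.head.subst σ }

/-- The least model of a datalog program: the least fixed point of `dImmCons`. -/
def dModel (P : Set DRule) : Set GAtom := ⋂₀ { X | dImmCons P X ⊆ X }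

/-- Translation of a datalog program to a finite-choice logic program, using the
constant with (fresh) function symbol `u` as the value `unit`. -/
def trDatalog (u : ℕ) (P : Set DRule) : Program :=
  { r | ∃ dr ∈ P,
      r = ⟨Head.closed dr.head.pred dr.head.args [VTerm.func u []],
           dr.prems.map (fun A => ⟨A.pred, A.args, VTerm.func u []⟩)⟩ }

/-! ### Answer set programming -/

/-- A ground ASP rule `p ← p₁,...,pₙ, ¬q₁,...,¬qₘ` over propositional atoms. -/
structure ASPRule where
  head : ℕ
  pos : List ℕ
  neg : List ℕ

/-- One step of the immediate consequence operator of the reduct `P^X`. -/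
def reductCons (P : Set ASPRule) (X : Set ℕ) (Y : Set ℕ) : Set ℕ :=
  { p | ∃ r ∈ P, r.head = p ∧ (∀ q ∈ r.pos, q ∈ Y) ∧ (∀ q ∈ r.neg, q ∉ X) }

/-- The least model of the reduct `P^X`. -/
def reductModel (P : Set ASPRule) (X : Set ℕ) : Set ℕ :=
  ⋂₀ { Y | reductCons P X Y ⊆ Y }

/-- `X` is a stable model of `P` when the least model of the reduct `P^X` equals `X`. -/
def StableModel (P : Set ASPRule) (X : Set ℕ) : Prop := reductModel P X = X

/-- The fresh constant `tt` (as a ground term). -/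
def ttT : GTerm := .func 0 []
/-- The fresh constant `ff` (as a ground term). -/
def ffT : GTerm := .func 1 []
/-- The constant `tt` as a (closed) term of the rule language. -/
def ttV : VTerm := .func 0 []
/-- The constant `ff` as a (closed) term of the rule language. -/
def ffV : VTerm := .func 1 []

/-- The premise `p is tt`. -/
def posPrem (p : ℕ) : VAtom := ⟨p, [], ttV⟩
/-- The premise `q is ff`. -/
def negPrem (q : ℕ) : VAtom := ⟨q, [], ffV⟩

/-- Translation of an ASP program to a finite-choice logic program: each rule
`p ← p₁,...,pₙ, ¬q₁,...,¬qₘ` becomes `m` open rules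
`qⱼ is? ff ← p₁ is tt,...,pₙ is tt, q₁ is ff,...,q_{j-1} is ff` and one closed rule
`p is {tt} ← p₁ is tt,...,pₙ is tt, q₁ is ff,...,qₘ is ff`. -/
def trASP (P : Set ASPRule) : Program :=
  { r | ∃ ar ∈ P,
      (∃ j : Fin ar.neg.length,
        r = ⟨Head.opn (ar.neg.get j) [] ffV,
             ar.pos.map posPrem ++ (ar.neg.take j.val).map negPrem⟩) ∨
      r = ⟨Head.closed ar.head [] [ttV],
           ar.pos.map posPrem ++ ar.neg.map negPrem⟩ }

/-! ### Auxiliary development -/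

section Aux

open Classical

/-! #### Constraint order basics -/

lemma cbot_le (c : Constraint) : Constraint.noneOf ∅ ≤ c := by
  cases c with
  | just t => show t ∉ (∅ : Set GTerm); simp
  | noneOf X => show (∅ : Set GTerm) ⊆ X; simp

lemma cle_refl (c : Constraint) : c ≤ c := by
  cases c with
  | just t => show t = t; rfl
  | noneOf X => show X ⊆ X; exact subset_rfl

lemma cle_trans {a b c : Constraint} (h₁ : a ≤ b) (h₂ : b ≤ c) : a ≤ c := by
  cases a with
  | just t =>
    cases b with
    | just t' => cases (h₁ : t = t'); exact h₂
    | noneOf X => exact absurd h₁ (by intro h; exact h)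
  | noneOf X =>
    cases b with
    | just t' =>
      cases c with
      | just t'' => cases (h₂ : t' = t''); exact h₁
      | noneOf Y => exact absurd h₂ (by intro h; exact h)
    | noneOf Y =>
      cases c with
      | just t'' => show t'' ∉ X; intro hx; exact (h₂ : t'' ∉ Y) ((h₁ : X ⊆ Y) hx)
      | noneOf Z => exact Set.Subset.trans h₁ h₂

lemma cle_antisymm {a b : Constraint} (h₁ : a ≤ b) (h₂ : b ≤ a) : a = b := by
  cases a with
  | just t =>
    cases b with
    | just t' => cases (h₁ : t = t'); rfl
    | noneOf X => exact absurd h₁ (by intro h; exact h)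
  | noneOf X =>
    cases b with
    | just t' => exact absurd h₂ (by intro h; exact h)
    | noneOf Y => exact congrArg _ (le_antisymm h₁ h₂)

lemma just_le_iff {v : GTerm} {c : Constraint} :
    Constraint.just v ≤ c ↔ c = .just v := by
  cases c with
  | just t =>
    constructor
    · intro h; cases (h : v = t); rfl
    · intro h; cases h; show v = v; rfl
  | noneOf X =>
    constructor
    · intro h; exact absurd h (by intro h; exact h)
    · intro h; cases h

lemma noneOf_le_just_iff {X : Set GTerm} {t : GTerm} :
    Constraint.noneOf X ≤ .just t ↔ t ∉ X := Iff.rfl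

lemma noneOf_le_noneOf_iff {X Y : Set GTerm} :
    Constraint.noneOf X ≤ .noneOf Y ↔ X ⊆ Y := Iff.rfl

lemma not_just_le_noneOf {t : GTerm} {X : Set GTerm} :
    ¬ (Constraint.just t ≤ .noneOf X) := by intro h; exact h

/-! #### CDB order basics -/

lemma cdb_le_def {Δ Δ' : CDB} : Δ ≤ Δ' ↔ ∀ a, Δ a ≤ Δ' a := Pi.le_def

lemma cdb_le_refl (Δ : CDB) : Δ ≤ Δ := cdb_le_def.mpr fun a => cle_refl _

lemma cdb_le_trans {Δ₁ Δ₂ Δ₃ : CDB} (h₁ : Δ₁ ≤ Δ₂) (h₂ : Δ₂ ≤ Δ₃) : Δ₁ ≤ Δ₃ :=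
  cdb_le_def.mpr fun a => cle_trans (cdb_le_def.mp h₁ a) (cdb_le_def.mp h₂ a)

lemma cdb_le_antisymm {Δ₁ Δ₂ : CDB} (h₁ : Δ₁ ≤ Δ₂) (h₂ : Δ₂ ≤ Δ₁) : Δ₁ = Δ₂ :=
  funext fun a => cle_antisymm (cdb_le_def.mp h₁ a) (cdb_le_def.mp h₂ a)

lemma cdbBot_le (Δ : CDB) : cdbBot ≤ Δ := cdb_le_def.mpr fun a => cbot_le _

lemma unitCDB_le_iff {a : Attr} {c : Constraint} {Δ : CDB} :
    unitCDB a c ≤ Δ ↔ c ≤ Δ a := by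
  constructor
  · intro h
    have := cdb_le_def.mp h a
    simpa [unitCDB] using this
  · intro h
    refine cdb_le_def.mpr fun a' => ?_
    by_cases ha : a' = a
    · subst ha; simpa [unitCDB] using h
    · simp only [unitCDB, if_neg ha]; exact cbot_le _

/-! #### Least upper bounds -/

lemma club_ub {C : Set Constraint} {y : Constraint} (hy : ∀ c ∈ C, c ≤ y) :
    ∀ c ∈ C, c ≤ Constraint.lub C := by
  intro c hc
  unfold Constraint.lub
  split
  · next h =>
    have hch : Constraint.just h.choose ∈ C := h.choose_spec
    have h₁ : Constraint.just h.choose ≤ y := hy _ hch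
    have hy₁ : y = .just h.choose := just_le_iff.mp h₁
    cases c with
    | just t =>
      have : y = .just t := just_le_iff.mp (hy _ hc)
      show t = h.choose
      rw [hy₁] at this; exact (Constraint.just.injEq _ _ ▸ this.symm)
    | noneOf X =>
      show h.choose ∉ X
      have := hy _ hc
      rw [hy₁] at this
      exact this
  · next h =>
    cases c with
    | just t => exact absurd ⟨t, hc⟩ h
    | noneOf X =>
      show X ⊆ ⋃₀ { X | Constraint.noneOf X ∈ C }
      exact Set.subset_sUnion_of_mem hc

lemma club_eq_max {C : Set Constraint} {m : Constraint} (hm : m ∈ C)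
    (hmax : ∀ c ∈ C, c ≤ m) : Constraint.lub C = m := by
  unfold Constraint.lub
  split
  · next h =>
    have hch : Constraint.just h.choose ∈ C := h.choose_spec
    exact (just_le_iff.mp (hmax _ hch)).symm
  · next h =>
    cases m with
    | just t => exact absurd ⟨t, hm⟩ h
    | noneOf X =>
      congr 1
      apply le_antisymm
      · apply Set.sUnion_subset
        intro X' hX'
        exact (hmax _ hX' : X' ⊆ X)
      · exact Set.subset_sUnion_of_mem hm

lemma cdblub_ub {S : Set CDB} (hcomp : Compatible S) :
    ∀ Δ ∈ S, Δ ≤ CDB.lub S := by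
  obtain ⟨y, hy⟩ := hcomp
  intro Δ hΔ
  refine cdb_le_def.mpr fun a => ?_
  exact club_ub (C := (fun Δ => Δ a) '' S)
    (by rintro c ⟨Δ', hΔ', rfl⟩; exact cdb_le_def.mp (hy _ hΔ') a)
    _ ⟨Δ, hΔ, rfl⟩

lemma cdblub_eq_max {S : Set CDB} {m : CDB} (hm : m ∈ S) (hmax : ∀ Δ ∈ S, Δ ≤ m) :
    CDB.lub S = m := by
  funext a
  exact club_eq_max ⟨m, hm, rfl⟩
    (by rintro c ⟨Δ', hΔ', rfl⟩; exact cdb_le_def.mp (hmax _ hΔ') a)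

lemma compat_of_le {x y z : CDB} (hx : x ≤ z) (hy : y ≤ z) : Compat x y := by
  refine ⟨z, ?_⟩
  rintro w (rfl | rfl)
  · exact hx
  · exact hy

end Aux
section Aux2

open Classical

/-! #### Promotion -/

lemma promote_just_mem {D : Set Fact} {a : Attr} {v : GTerm}
    (h : promote D a = .just v) : (⟨a, v⟩ : Fact) ∈ D := by
  unfold promote at h
  split at h
  · next hex =>
    cases h
    exact hex.choose_spec
  · cases h

lemma promote_eq_just {D : Set Fact} (hcons : Consistent D) {a : Attr} {v : GTerm}
    (h : (⟨a, v⟩ : Fact) ∈ D) : promote D a = .just v := by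
  unfold promote
  split
  · next hex =>
    have h1 : (⟨a, hex.choose⟩ : Fact) ∈ D := hex.choose_spec
    have := hcons _ h1 _ h rfl
    cases this; rfl
  · next hex => exact absurd ⟨v, h⟩ hex

lemma promote_noneOf {D : Set Fact} {a : Attr} {X : Set GTerm}
    (h : promote D a = .noneOf X) : X = ∅ ∧ ¬ ∃ v, (⟨a, v⟩ : Fact) ∈ D := by
  unfold promote at h
  split at h
  · cases h
  · next hex => cases h; exact ⟨rfl, hex⟩

/-! #### Satisfaction -/

lemma satC_of_satF {σ : Subst} {F : List VAtom} {D : Set Fact} (hcons : Consistent D)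
    (h : satF σ F D) : satC σ F (promote D) := by
  intro A hA
  have := h A hA
  have hj : promote D ⟨A.pred, A.args.map (VTerm.subst σ)⟩ = .just (A.value.subst σ) :=
    promote_eq_just hcons this
  rw [hj]
  show A.value.subst σ = A.value.subst σ; rfl

lemma satF_of_satC {σ : Subst} {F : List VAtom} {D : Set Fact}
    (h : satC σ F (promote D)) : satF σ F D := by
  intro A hA
  have := h A hA
  have hj := just_le_iff.mp this
  exact promote_just_mem hj

lemma satC_mono {σ : Subst} {F : List VAtom} {Δ Δ' : CDB}
    (hle : ∀ a v, Δ a = .just v → Δ' a = .just v) (h : satC σ F Δ) : satC σ F Δ' := by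
  intro A hA
  have := just_le_iff.mp (h A hA)
  rw [hle _ _ this]
  exact cle_refl _

lemma satF_mono {σ : Subst} {F : List VAtom} {D D' : Set Fact}
    (hsub : D ⊆ D') (h : satF σ F D) : satF σ F D' :=
  fun A hA => hsub (h A hA)

/-! #### Derivability -/

/-- The set of head facts of a ground rule head. -/
def headFacts (σ : Subst) : Head → Set Fact
  | .opn p args v => {⟨⟨p, args.map (VTerm.subst σ)⟩, v.subst σ⟩}
  | .closed p args vs => { f | ∃ v ∈ vs, f = ⟨⟨p, args.map (VTerm.subst σ)⟩, v.subst σ⟩ }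

/-- One step of derivability relative to the choices recorded in `Δ`. -/
def DerStep (P : Program) (Δ : CDB) (X : Set Fact) : Set Fact :=
  { f | (∃ r ∈ P, ∃ σ : Subst, satF σ r.prems X ∧ f ∈ headFacts σ r.head) ∧
        Δ f.attr = .just f.value }

/-- Facts derivable relative to the choices recorded in `Δ`. -/
def Der (P : Program) (Δ : CDB) : Set Fact := ⋂₀ { X | DerStep P Δ X ⊆ X }

lemma DerStep_mono {P : Program} {Δ : CDB} {X Y : Set Fact} (h : X ⊆ Y) :
    DerStep P Δ X ⊆ DerStep P Δ Y := by
  rintro f ⟨⟨r, hr, σ, hsat, hf⟩, hj⟩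
  exact ⟨⟨r, hr, σ, satF_mono h hsat, hf⟩, hj⟩

lemma Der_le {P : Program} {Δ : CDB} {X : Set Fact} (h : DerStep P Δ X ⊆ X) :
    Der P Δ ⊆ X := Set.sInter_subset_of_mem h

lemma Der_closed {P : Program} {Δ : CDB} : DerStep P Δ (Der P Δ) ⊆ Der P Δ := by
  intro f hf
  intro X hX
  exact hX (DerStep_mono (Der_le hX) hf)

lemma Der_subset_just {P : Program} {Δ : CDB} :
    Der P Δ ⊆ { f | Δ f.attr = .just f.value } :=
  Der_le (by rintro f ⟨_, hj⟩; exact hj)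

lemma mem_Der_step {P : Program} {Δ : CDB} {f : Fact}
    (h : (∃ r ∈ P, ∃ σ : Subst, satF σ r.prems (Der P Δ) ∧ f ∈ headFacts σ r.head))
    (hj : Δ f.attr = .just f.value) : f ∈ Der P Δ :=
  Der_closed ⟨h, hj⟩

/-! #### The canonical least fixed point -/

/-- Every rule instance satisfied in `Δ` has a resolution below `Δ`. -/
def SatCP (P : Program) (Δ : CDB) : Prop :=
  ∀ r ∈ P, ∀ σ : Subst, satC σ r.prems Δ → ∃ c ∈ headChoice σ r.head, c ≤ Δ

/-- Every declined value is declined by a satisfied open rule instance. -/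
def ExactN (P : Program) (Δ : CDB) : Prop :=
  ∀ a X, Δ a = .noneOf X → ∀ t ∈ X,
    ∃ r ∈ P, ∃ σ : Subst, ∃ p args v, r.head = .opn p args v ∧ satC σ r.prems Δ ∧
      (⟨p, args.map (VTerm.subst σ)⟩ : Attr) = a ∧ v.subst σ = t

/-- Every positive fact of `Δ` is derivable. -/
def GroundedJ (P : Program) (Δ : CDB) : Prop :=
  ∀ a v, Δ a = .just v → (⟨a, v⟩ : Fact) ∈ Der P Δ

/-- The canonical description of the least fixed point of `T_P*`. -/
def Canon (P : Program) : Set CDB :=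
  { Δ | SatCP P Δ ∧ GroundedJ P Δ ∧ ExactN P Δ }

end Aux2
section Aux3

open Classical

/-! #### Analysis of head choices -/

lemma headChoice_opn_mem_just (σ : Subst) (p : ℕ) (args : List VTerm) (v : VTerm) :
    unitCDB ⟨p, args.map (VTerm.subst σ)⟩ (.just (v.subst σ)) ∈
      headChoice σ (.opn p args v) := by
  simp [headChoice]

lemma headChoice_opn_mem_noneOf (σ : Subst) (p : ℕ) (args : List VTerm) (v : VTerm) :
    unitCDB ⟨p, args.map (VTerm.subst σ)⟩ (.noneOf {v.subst σ}) ∈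
      headChoice σ (.opn p args v) := by
  simp [headChoice]

lemma headChoice_closed_mem_just (σ : Subst) (p : ℕ) (args : List VTerm)
    {vs : List VTerm} {v : VTerm} (hv : v ∈ vs) :
    unitCDB ⟨p, args.map (VTerm.subst σ)⟩ (.just (v.subst σ)) ∈
      headChoice σ (.closed p args vs) := by
  exact ⟨v, hv, rfl⟩

lemma headChoice_opn_cases {σ : Subst} {p : ℕ} {args : List VTerm} {v : VTerm}
    {c : CDB} {Δ : CDB} (hc : c ∈ headChoice σ (.opn p args v)) (hle : c ≤ Δ) :
    Δ ⟨p, args.map (VTerm.subst σ)⟩ = .just (v.subst σ) ∨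
      Constraint.noneOf {v.subst σ} ≤ Δ ⟨p, args.map (VTerm.subst σ)⟩ := by
  simp only [headChoice, Set.mem_insert_iff, Set.mem_singleton_iff] at hc
  rcases hc with rfl | rfl
  · left; exact just_le_iff.mp (unitCDB_le_iff.mp hle)
  · right; exact unitCDB_le_iff.mp hle

lemma headChoice_closed_cases {σ : Subst} {p : ℕ} {args : List VTerm} {vs : List VTerm}
    {c : CDB} {Δ : CDB} (hc : c ∈ headChoice σ (.closed p args vs)) (hle : c ≤ Δ) :
    ∃ w ∈ vs, Δ ⟨p, args.map (VTerm.subst σ)⟩ = .just (w.subst σ) := by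
  obtain ⟨w, hw, rfl⟩ := hc
  exact ⟨w, hw, just_le_iff.mp (unitCDB_le_iff.mp hle)⟩

/-! #### The canonical lfp is a choice set -/

lemma just_mono_of_compat {P : Program} {Δ₁ Δ₂ : CDB}
    (h1 : GroundedJ P Δ₁) (h2 : SatCP P Δ₂) (hcompat : Compat Δ₁ Δ₂) :
    ∀ a v, Δ₁ a = .just v → Δ₂ a = .just v := by
  obtain ⟨y, hy⟩ := hcompat
  have hy₁ : Δ₁ ≤ y := hy _ (Or.inl rfl)
  have hy₂ : Δ₂ ≤ y := hy _ (Or.inr rfl)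
  have key : Der P Δ₁ ⊆ { f | Δ₂ f.attr = .just f.value } := by
    apply Der_le
    rintro f ⟨⟨r, hr, σ, hsat, hf⟩, hj⟩
    have hsatC : satC σ r.prems Δ₂ := by
      intro A hA
      exact just_le_iff.mpr (hsat A hA)
    obtain ⟨c, hc, hcle⟩ := h2 r hr σ hsatC
    cases hhead : r.head with
    | opn p args v =>
      rw [hhead] at hc
      have hfe : f = ⟨⟨p, args.map (VTerm.subst σ)⟩, v.subst σ⟩ := by
        have := hf; rw [hhead] at this; exact this
      subst hfe
      rcases headChoice_opn_cases hc hcle with h | h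
      · exact h
      · exfalso
        have hya : y ⟨p, args.map (VTerm.subst σ)⟩ = .just (v.subst σ) := by
          apply just_le_iff.mp
          have := cdb_le_def.mp hy₁ ⟨p, args.map (VTerm.subst σ)⟩
          rwa [hj] at this
        have h2y : Δ₂ ⟨p, args.map (VTerm.subst σ)⟩ ≤ .just (v.subst σ) := by
          have := cdb_le_def.mp hy₂ ⟨p, args.map (VTerm.subst σ)⟩
          rwa [hya] at this
        exact (noneOf_le_just_iff.mp (cle_trans h h2y)) rfl
    | closed p args vs =>
      rw [hhead] at hc
      obtain ⟨w, hw, hfe⟩ : ∃ w ∈ vs, f = ⟨⟨p, args.map (VTerm.subst σ)⟩, w.subst σ⟩ := by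
        have := hf; rw [hhead] at this; exact this
      subst hfe
      obtain ⟨w', hw', h2a⟩ := headChoice_closed_cases hc hcle
      have hya : y ⟨p, args.map (VTerm.subst σ)⟩ = .just (w.subst σ) := by
        apply just_le_iff.mp
        have := cdb_le_def.mp hy₁ ⟨p, args.map (VTerm.subst σ)⟩
        rwa [hj] at this
      have hya' : y ⟨p, args.map (VTerm.subst σ)⟩ = .just (w'.subst σ) := by
        apply just_le_iff.mp
        have := cdb_le_def.mp hy₂ ⟨p, args.map (VTerm.subst σ)⟩
        rwa [h2a] at this
      have heq : VTerm.subst σ w' = VTerm.subst σ w := by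
        rw [hya] at hya'
        exact (Constraint.just.inj hya').symm
      show Δ₂ _ = _
      rw [h2a, heq]
  intro a v h
  exact key (h1 a v h)

lemma canon_isChoiceSet (P : Program) : IsChoiceSet (Canon P) := by
  rintro Δ₁ ⟨hs1, hg1, he1⟩ Δ₂ ⟨hs2, hg2, he2⟩ hcompat
  have hcompat' : Compat Δ₂ Δ₁ := by
    obtain ⟨y, hy⟩ := hcompat
    exact ⟨y, by rintro x (rfl | rfl); exacts [hy _ (Or.inr rfl), hy _ (Or.inl rfl)]⟩
  have h12 := just_mono_of_compat hg1 hs2 hcompat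
  have h21 := just_mono_of_compat hg2 hs1 hcompat'
  funext a
  cases h1a : Δ₁ a with
  | just v => exact ((h12 a v h1a).symm.trans rfl).symm ▸ (h12 a v h1a).symm
  | noneOf X₁ =>
    cases h2a : Δ₂ a with
    | just v => rw [h21 a v h2a] at h1a; cases h1a
    | noneOf X₂ =>
      congr 1
      apply Set.eq_of_subset_of_subset
      · intro t ht
        obtain ⟨r, hr, σ, p, args, v, hhead, hsat, hattr, hval⟩ := he1 a X₁ h1a t ht
        have hsat2 : satC σ r.prems Δ₂ := by
          intro A hA
          have := just_le_iff.mp (hsat A hA)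
          rw [h12 _ _ this]
          exact cle_refl _
        obtain ⟨c, hc, hcle⟩ := hs2 r hr σ hsat2
        rw [hhead] at hc
        rcases headChoice_opn_cases hc hcle with h | h
        · rw [hattr, h2a] at h; cases h
        · rw [hattr, h2a] at h
          have := noneOf_le_noneOf_iff.mp h
          rw [← hval]
          exact this rfl
      · intro t ht
        obtain ⟨r, hr, σ, p, args, v, hhead, hsat, hattr, hval⟩ := he2 a X₂ h2a t ht
        have hsat1 : satC σ r.prems Δ₁ := by
          intro A hA
          have := just_le_iff.mp (hsat A hA)
          rw [h21 _ _ this]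
          exact cle_refl _
        obtain ⟨c, hc, hcle⟩ := hs1 r hr σ hsat1
        rw [hhead] at hc
        rcases headChoice_opn_cases hc hcle with h | h
        · rw [hattr, h1a] at h; cases h
        · rw [hattr, h1a] at h
          have := noneOf_le_noneOf_iff.mp h
          rw [← hval]
          exact this rfl

end Aux3
section Aux4

open Classical

/-- If every satisfied instance has a resolution below `Δ`, then `Δ ∈ T_P(Δ)`. -/
lemma mem_TP_self {P : Program} {Δ : CDB} (h : SatCP P Δ) : Δ ∈ TP P Δ := by
  have hex : ∀ i : ↥(insert {Δ}
      { C | ∃ r ∈ P, ∃ σ : Subst, satC σ r.prems Δ ∧ C = headChoice σ r.head }),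
      ∃ c, c ∈ (i : Set CDB) ∧ c ≤ Δ := by
    rintro ⟨C, hC⟩
    rcases Set.mem_insert_iff.mp hC with rfl | hC
    · exact ⟨Δ, rfl, cdb_le_refl Δ⟩
    · obtain ⟨r, hr, σ, hsat, rfl⟩ := hC
      obtain ⟨c, hc, hle⟩ := h r hr σ hsat
      exact ⟨c, hc, hle⟩
  choose f hf₁ hf₂ using hex
  have hmem : Δ ∈ Set.range f := by
    refine ⟨⟨{Δ}, Set.mem_insert _ _⟩, ?_⟩
    exact Set.eq_of_mem_singleton (hf₁ ⟨{Δ}, Set.mem_insert _ _⟩)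
  have hmax : ∀ x ∈ Set.range f, x ≤ Δ := by
    rintro x ⟨i, rfl⟩; exact hf₂ i
  exact ⟨f, hf₁, ⟨Δ, hmax⟩, (cdblub_eq_max hmem hmax).symm⟩

lemma canon_prefixed (P : Program) : ChoiceLE (TPs P (Canon P)) (Canon P) := by
  intro Δ hΔ
  exact ⟨Δ, ⟨Δ, hΔ, mem_TP_self hΔ.1⟩, cdb_le_refl Δ⟩

/-- Every element of a prefixed choice set resolves all its satisfied instances. -/
lemma prefixed_satCP {P : Program} {Y : Set CDB} (hY : IsChoiceSet Y)
    (hpre : ChoiceLE (TPs P Y) Y) : ∀ Δ ∈ Y, SatCP P Δ := by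
  intro Δ hΔ
  obtain ⟨E, hE, hle⟩ := hpre Δ hΔ
  obtain ⟨Δ₁, hΔ₁Y, hETP⟩ := hE
  obtain ⟨f, hf₁, hcomp, hElub⟩ := hETP
  have hΔ₁mem : Δ₁ ∈ Set.range f := by
    refine ⟨⟨{Δ₁}, Set.mem_insert _ _⟩, ?_⟩
    exact Set.eq_of_mem_singleton (hf₁ ⟨{Δ₁}, Set.mem_insert _ _⟩)
  have hΔ₁E : Δ₁ ≤ E := by
    rw [hElub]; exact cdblub_ub hcomp _ hΔ₁mem
  have heq : Δ₁ = Δ :=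
    hY Δ₁ hΔ₁Y Δ hΔ (compat_of_le (cdb_le_trans hΔ₁E hle) (cdb_le_refl Δ))
  have hEΔ : E = Δ := cdb_le_antisymm hle (heq ▸ hΔ₁E)
  intro r hr σ hsat
  have hsat₁ : satC σ r.prems Δ₁ := heq ▸ hsat
  have hCmem : headChoice σ r.head ∈ insert {Δ₁}
      { C | ∃ r' ∈ P, ∃ σ' : Subst, satC σ' r'.prems Δ₁ ∧ C = headChoice σ' r'.head } :=
    Set.mem_insert_of_mem _ ⟨r, hr, σ, hsat₁, rfl⟩
  refine ⟨f ⟨_, hCmem⟩, hf₁ ⟨_, hCmem⟩, ?_⟩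
  have : f ⟨_, hCmem⟩ ≤ E := by
    rw [hElub]; exact cdblub_ub hcomp _ ⟨_, rfl⟩
  exact hEΔ ▸ this

end Aux4
section Aux5

open Classical

/-- Values declined at `a` by satisfied open instances (relative to derivable facts). -/
def coreN (P : Program) (Δ : CDB) (a : Attr) : Set GTerm :=
  { t | ∃ r ∈ P, ∃ σ : Subst, ∃ p args v, r.head = .opn p args v ∧
        satF σ r.prems (Der P Δ) ∧ (⟨p, args.map (VTerm.subst σ)⟩ : Attr) = a ∧
        v.subst σ = t }

/-- The grounded core of a constraint database. -/
noncomputable def core (P : Program) (Δ : CDB) : CDB := fun a =>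
  if h : ∃ v, (⟨a, v⟩ : Fact) ∈ Der P Δ then .just h.choose else .noneOf (coreN P Δ a)

lemma Der_unique {P : Program} {Δ : CDB} {a : Attr} {v w : GTerm}
    (hv : (⟨a, v⟩ : Fact) ∈ Der P Δ) (hw : (⟨a, w⟩ : Fact) ∈ Der P Δ) : v = w := by
  have h1 : Δ a = .just v := Der_subset_just hv
  have h2 : Δ a = .just w := Der_subset_just hw
  rw [h1] at h2
  exact Constraint.just.inj h2

lemma core_just_iff {P : Program} {Δ : CDB} {a : Attr} {v : GTerm} :
    core P Δ a = .just v ↔ (⟨a, v⟩ : Fact) ∈ Der P Δ := by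
  unfold core
  split
  · next h =>
    constructor
    · intro he
      have hspec := h.choose_spec
      have hv := Constraint.just.inj he
      subst hv
      exact hspec
    · intro hv
      rw [Der_unique h.choose_spec hv]
  · next h =>
    constructor
    · intro he; cases he
    · intro hv; exact absurd ⟨v, hv⟩ h

lemma core_noneOf {P : Program} {Δ : CDB} {a : Attr} {X : Set GTerm}
    (h : core P Δ a = .noneOf X) :
    X = coreN P Δ a ∧ ¬ ∃ v, (⟨a, v⟩ : Fact) ∈ Der P Δ := by
  unfold core at h
  split at h
  · cases h
  · next hne => exact ⟨(Constraint.noneOf.inj h).symm, hne⟩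

lemma satC_of_Der {P : Program} {Δ : CDB} {σ : Subst} {F : List VAtom}
    (h : satF σ F (Der P Δ)) : satC σ F Δ := by
  intro A hA
  exact just_le_iff.mpr (Der_subset_just (h A hA))

lemma satC_core_of_Der {P : Program} {Δ : CDB} {σ : Subst} {F : List VAtom}
    (h : satF σ F (Der P Δ)) : satC σ F (core P Δ) := by
  intro A hA
  exact just_le_iff.mpr (core_just_iff.mpr (h A hA))

lemma satF_Der_of_core {P : Program} {Δ : CDB} {σ : Subst} {F : List VAtom}
    (h : satC σ F (core P Δ)) : satF σ F (Der P Δ) := by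
  intro A hA
  exact core_just_iff.mp (just_le_iff.mp (h A hA))

lemma core_le {P : Program} {Δ : CDB} (hS : SatCP P Δ) : core P Δ ≤ Δ := by
  refine cdb_le_def.mpr fun a => ?_
  by_cases h : ∃ v, (⟨a, v⟩ : Fact) ∈ Der P Δ
  · have hj : core P Δ a = .just h.choose := by
      unfold core; rw [dif_pos h]
    rw [hj, Der_subset_just h.choose_spec]
    exact cle_refl _
  · have hn : core P Δ a = .noneOf (coreN P Δ a) := by
      unfold core; rw [dif_neg h]
    rw [hn]
    cases hΔa : Δ a with
    | just t =>
      refine noneOf_le_just_iff.mpr ?_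
      rintro ⟨r, hr, σ, p, args, v, hhead, hsat, hattr, hval⟩
      have hsatΔ : satC σ r.prems Δ := satC_of_Der hsat
      obtain ⟨c, hc, hcle⟩ := hS r hr σ hsatΔ
      rw [hhead] at hc
      rcases headChoice_opn_cases hc hcle with hcase | hcase
      · refine h ⟨v.subst σ, ?_⟩
        refine mem_Der_step ⟨r, hr, σ, hsat, ?_⟩ ?_
        · rw [hhead, ← hattr]; exact rfl
        · show Δ a = _
          rw [← hattr]; exact hcase
      · rw [hattr, hΔa] at hcase
        exact (noneOf_le_just_iff.mp hcase) (by rw [hval]; exact rfl)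
    | noneOf X =>
      refine noneOf_le_noneOf_iff.mpr ?_
      rintro t ⟨r, hr, σ, p, args, v, hhead, hsat, hattr, hval⟩
      have hsatΔ : satC σ r.prems Δ := satC_of_Der hsat
      obtain ⟨c, hc, hcle⟩ := hS r hr σ hsatΔ
      rw [hhead] at hc
      rcases headChoice_opn_cases hc hcle with hcase | hcase
      · rw [hattr, hΔa] at hcase; cases hcase
      · rw [hattr, hΔa] at hcase
        have := noneOf_le_noneOf_iff.mp hcase
        exact this (by rw [hval]; exact rfl)

lemma Der_sub_core {P : Program} {Δ : CDB} :
    Der P Δ ⊆ Der P (core P Δ) := by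
  have : Der P Δ ⊆ Der P Δ ∩ Der P (core P Δ) := by
    apply Der_le
    rintro f ⟨⟨r, hr, σ, hsat, hf⟩, hj⟩
    have hfΔ : f ∈ Der P Δ :=
      Der_closed ⟨⟨r, hr, σ, satF_mono Set.inter_subset_left hsat, hf⟩, hj⟩
    refine ⟨hfΔ, mem_Der_step ⟨r, hr, σ, satF_mono Set.inter_subset_right hsat, hf⟩ ?_⟩
    have : (⟨f.attr, f.value⟩ : Fact) ∈ Der P Δ := hfΔ
    exact core_just_iff.mpr this
  exact fun f hf => (this hf).2

lemma core_mem_canon {P : Program} {Δ : CDB} (hS : SatCP P Δ) : core P Δ ∈ Canon P := by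
  refine ⟨?_, ?_, ?_⟩
  · -- SatCP
    intro r hr σ hsat
    have hsatDer : satF σ r.prems (Der P Δ) := satF_Der_of_core hsat
    have hsatΔ : satC σ r.prems Δ := satC_of_Der hsatDer
    obtain ⟨c, hc, hcle⟩ := hS r hr σ hsatΔ
    cases hhead : r.head with
    | closed p args vs =>
      rw [hhead] at hc
      obtain ⟨w, hw, hΔa⟩ := headChoice_closed_cases hc hcle
      have hder : (⟨⟨p, args.map (VTerm.subst σ)⟩, w.subst σ⟩ : Fact) ∈ Der P Δ := by
        refine mem_Der_step ⟨r, hr, σ, hsatDer, ?_⟩ hΔa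
        rw [hhead]; exact ⟨w, hw, rfl⟩
      refine ⟨unitCDB ⟨p, args.map (VTerm.subst σ)⟩ (.just (w.subst σ)), ?_, ?_⟩
      · exact headChoice_closed_mem_just σ p args hw
      · refine unitCDB_le_iff.mpr ?_
        rw [core_just_iff.mpr hder]
        exact cle_refl _
    | opn p args v =>
      by_cases hmem : (⟨⟨p, args.map (VTerm.subst σ)⟩, v.subst σ⟩ : Fact) ∈ Der P Δ
      · refine ⟨unitCDB ⟨p, args.map (VTerm.subst σ)⟩ (.just (v.subst σ)), ?_, ?_⟩
        · exact headChoice_opn_mem_just σ p args v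
        · refine unitCDB_le_iff.mpr ?_
          rw [core_just_iff.mpr hmem]
          exact cle_refl _
      · refine ⟨unitCDB ⟨p, args.map (VTerm.subst σ)⟩ (.noneOf {v.subst σ}), ?_, ?_⟩
        · exact headChoice_opn_mem_noneOf σ p args v
        · refine unitCDB_le_iff.mpr ?_
          by_cases hex : ∃ w, (⟨⟨p, args.map (VTerm.subst σ)⟩, w⟩ : Fact) ∈ Der P Δ
          · have hj : core P Δ ⟨p, args.map (VTerm.subst σ)⟩ = .just hex.choose := by
              unfold core; rw [dif_pos hex]
            rw [hj]
            refine noneOf_le_just_iff.mpr ?_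
            intro hmem'
            exact hmem (Set.mem_singleton_iff.mp hmem' ▸ hex.choose_spec)
          · have hn : core P Δ ⟨p, args.map (VTerm.subst σ)⟩ =
                .noneOf (coreN P Δ ⟨p, args.map (VTerm.subst σ)⟩) := by
              unfold core; rw [dif_neg hex]
            rw [hn]
            refine noneOf_le_noneOf_iff.mpr ?_
            intro t ht
            rw [Set.mem_singleton_iff.mp ht]
            exact ⟨r, hr, σ, p, args, v, hhead, hsatDer, rfl, rfl⟩
  · -- GroundedJ
    intro a v h
    exact Der_sub_core (core_just_iff.mp h)
  · -- ExactN
    intro a X h t ht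
    obtain ⟨hX, -⟩ := core_noneOf h
    rw [hX] at ht
    obtain ⟨r, hr, σ, p, args, v, hhead, hsat, hattr, hval⟩ := ht
    exact ⟨r, hr, σ, p, args, v, hhead, satC_core_of_Der hsat, hattr, hval⟩

lemma canon_lower {P : Program} {Y : Set CDB} (hY : IsChoiceSet Y)
    (hpre : ChoiceLE (TPs P Y) Y) : ChoiceLE (Canon P) Y := by
  intro Δ hΔ
  have hS := prefixed_satCP hY hpre Δ hΔ
  exact ⟨core P Δ, core_mem_canon hS, core_le hS⟩

end Aux5
section Aux6

open Classical

lemma canon_mem_pre (P : Program) :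
    Canon P ∈ { C | IsChoiceSet C ∧ ChoiceLE (TPs P C) C } :=
  ⟨canon_isChoiceSet P, canon_prefixed P⟩

lemma canon_mem_lb (P : Program) :
    Canon P ∈ { C | IsChoiceSet C ∧
      ∀ X ∈ { C | IsChoiceSet C ∧ ChoiceLE (TPs P C) C }, ChoiceLE C X } :=
  ⟨canon_isChoiceSet P, fun _Y hY => canon_lower hY.1 hY.2⟩

/-- The Knaster–Tarski style meet agrees with the canonical description. -/
lemma lfpTPs_eq_canon (P : Program) : lfpTPs P = Canon P := by
  apply Set.eq_of_subset_of_subset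
  · rintro Δ ⟨f, hf₁, hcomp, hlub⟩
    obtain ⟨y, hy⟩ := hcomp
    have hΔ₀ : f ⟨Canon P, canon_mem_lb P⟩ ∈ Canon P := hf₁ ⟨Canon P, canon_mem_lb P⟩
    have hmax : ∀ x ∈ Set.range f, x ≤ f ⟨Canon P, canon_mem_lb P⟩ := by
      rintro x ⟨i, rfl⟩
      obtain ⟨hC1, hC2⟩ := i.2
      obtain ⟨c, hci, hcle⟩ := hC2 (Canon P) (canon_mem_pre P) _ hΔ₀
      have hcompat : Compat (f i) c := by
        refine ⟨y, ?_⟩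
        rintro w (rfl | rfl)
        · exact hy _ ⟨i, rfl⟩
        · exact cdb_le_trans hcle (hy _ ⟨⟨Canon P, canon_mem_lb P⟩, rfl⟩)
      have := hC1 (f i) (hf₁ i) c hci hcompat
      rw [this]
      exact hcle
    have hΔeq : Δ = f ⟨Canon P, canon_mem_lb P⟩ := by
      rw [hlub]
      exact cdblub_eq_max ⟨⟨Canon P, canon_mem_lb P⟩, rfl⟩ hmax
    rw [hΔeq]
    exact hΔ₀
  · intro Δ₀ hΔ₀
    have hsel : ∀ i : ↥{ C | IsChoiceSet C ∧
        ∀ X ∈ { C | IsChoiceSet C ∧ ChoiceLE (TPs P C) C }, ChoiceLE C X },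
        ∃ c, c ∈ (i : Set CDB) ∧ c ≤ Δ₀ := by
      rintro ⟨C, hC1, hC2⟩
      obtain ⟨c, hc, hle⟩ := hC2 (Canon P) (canon_mem_pre P) Δ₀ hΔ₀
      exact ⟨c, hc, hle⟩
    choose f hf₁ hf₂ using hsel
    have hfiX : f ⟨Canon P, canon_mem_lb P⟩ = Δ₀ := by
      refine canon_isChoiceSet P _ (hf₁ ⟨Canon P, canon_mem_lb P⟩) Δ₀ hΔ₀ ?_
      exact compat_of_le (hf₂ ⟨Canon P, canon_mem_lb P⟩) (cdb_le_refl Δ₀)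
    have hmax : ∀ x ∈ Set.range f, x ≤ Δ₀ := by
      rintro x ⟨i, rfl⟩; exact hf₂ i
    exact ⟨f, hf₁, ⟨Δ₀, hmax⟩,
      (cdblub_eq_max (⟨⟨Canon P, canon_mem_lb P⟩, hfiX⟩ : Δ₀ ∈ Set.range f) hmax).symm⟩

end Aux6
section Aux7

open Classical

lemma fact_ext {f g : Fact} (h1 : f.attr = g.attr) (h2 : f.value = g.value) : f = g := by
  cases f; cases g; cases h1; cases h2; rfl

lemma consistent_subset {D E : Set Fact} (h : Consistent D) (hs : E ⊆ D) : Consistent E :=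
  fun f hf g hg => h f (hs hf) g (hs hg)

lemma exists_conflict {D : Set Fact} (hcons : Consistent D) {f : Fact}
    (h : ¬ Consistent (insert f D)) :
    ∃ g ∈ D, g.attr = f.attr ∧ g.value ≠ f.value := by
  by_contra hng
  push_neg at hng
  apply h
  rintro x (rfl | hx) y (rfl | hy) hattr
  · rfl
  · exact (fact_ext hattr.symm (hng y hy hattr.symm)).symm
  · exact fact_ext hattr (hng x hx hattr)
  · exact hcons x hx y hy hattr

/-- Saturated fact databases resolve all their satisfied instances. -/
lemma satCP_of_saturated {P : Program} {D : Set Fact} (hcons : Consistent D)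
    (hsat : Saturated P D) : SatCP P (promote D) := by
  intro r hr σ hsatC
  have hsatF : satF σ r.prems D := satF_of_satC hsatC
  cases hhead : r.head with
  | closed p args vs =>
    have hev := Evolve.closed (σ := σ) hr hhead hsatF
    have hS := hsat _ hev
    have hD : D ∈ ({D} : Set (Set Fact)) := rfl
    rw [← hS] at hD
    obtain ⟨v, hv, hED, -⟩ := hD
    have hfD : (⟨⟨p, args.map (VTerm.subst σ)⟩, VTerm.subst σ v⟩ : Fact) ∈ D :=
      Set.insert_eq_self.mp hED.symm
    refine ⟨unitCDB ⟨p, args.map (VTerm.subst σ)⟩ (.just (v.subst σ)), ?_, ?_⟩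
    · exact headChoice_closed_mem_just σ p args hv
    · refine unitCDB_le_iff.mpr ?_
      rw [promote_eq_just hcons hfD]
      exact cle_refl _
  | opn p args v =>
    have hev := Evolve.opn (σ := σ) hr hhead hsatF
    have hS := hsat _ hev
    by_cases hfD : (⟨⟨p, args.map (VTerm.subst σ)⟩, VTerm.subst σ v⟩ : Fact) ∈ D
    · refine ⟨unitCDB ⟨p, args.map (VTerm.subst σ)⟩ (.just (v.subst σ)), ?_, ?_⟩
      · exact headChoice_opn_mem_just σ p args v
      · refine unitCDB_le_iff.mpr ?_
        rw [promote_eq_just hcons hfD]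
        exact cle_refl _
    · have hnc : ¬ Consistent
          (insert (⟨⟨p, args.map (VTerm.subst σ)⟩, VTerm.subst σ v⟩ : Fact) D) := by
        intro hc
        have hmem : insert (⟨⟨p, args.map (VTerm.subst σ)⟩, VTerm.subst σ v⟩ : Fact) D ∈
            ({D} : Set (Set Fact)) := by
          rw [← hS]; exact Or.inr ⟨rfl, hc⟩
        exact hfD (Set.insert_eq_self.mp (Set.mem_singleton_iff.mp hmem))
      obtain ⟨g, hg, hgattr, hgval⟩ := exists_conflict hcons hnc
      refine ⟨unitCDB ⟨p, args.map (VTerm.subst σ)⟩ (.noneOf {v.subst σ}), ?_, ?_⟩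
      · exact headChoice_opn_mem_noneOf σ p args v
      · refine unitCDB_le_iff.mpr ?_
        have hgD : (⟨⟨p, args.map (VTerm.subst σ)⟩, g.value⟩ : Fact) ∈ D := by
          have : g = ⟨⟨p, args.map (VTerm.subst σ)⟩, g.value⟩ := fact_ext hgattr rfl
          rwa [← this]
        rw [promote_eq_just hcons hgD]
        refine noneOf_le_just_iff.mpr ?_
        intro hmem
        exact hgval (Set.mem_singleton_iff.mp hmem)

/-- Databases resolving all their satisfied instances are saturated. -/
lemma saturated_of_satCP {P : Program} {D : Set Fact} (hcons : Consistent D)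
    (h : SatCP P (promote D)) : Saturated P D := by
  intro S hev
  cases hev with
  | triv => rfl
  | @closed r p args vs σ hr hhead hsatF =>
    obtain ⟨c, hc, hcle⟩ := h r hr σ (satC_of_satF hcons hsatF)
    rw [hhead] at hc
    obtain ⟨w, hw, hpa⟩ := headChoice_closed_cases hc hcle
    have hwD : (⟨⟨p, args.map (VTerm.subst σ)⟩, VTerm.subst σ w⟩ : Fact) ∈ D :=
      promote_just_mem hpa
    apply Set.eq_of_subset_of_subset
    · rintro E ⟨v, hv, rfl, hconsE⟩
      have h1 : (⟨⟨p, args.map (VTerm.subst σ)⟩, VTerm.subst σ v⟩ : Fact) ∈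
          insert (⟨⟨p, args.map (VTerm.subst σ)⟩, VTerm.subst σ v⟩ : Fact) D :=
        Set.mem_insert _ _
      have h2 : (⟨⟨p, args.map (VTerm.subst σ)⟩, VTerm.subst σ w⟩ : Fact) ∈
          insert (⟨⟨p, args.map (VTerm.subst σ)⟩, VTerm.subst σ v⟩ : Fact) D :=
        Set.mem_insert_of_mem _ hwD
      have heq := hconsE _ h1 _ h2 rfl
      have hvw : VTerm.subst σ v = VTerm.subst σ w := congrArg Fact.value heq
      show _ ∈ ({D} : Set (Set Fact))
      rw [hvw]
      exact Set.insert_eq_self.mpr hwD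
    · rintro E rfl
      exact ⟨w, hw, (Set.insert_eq_self.mpr hwD).symm, hcons⟩
  | @opn r p args v σ hr hhead hsatF =>
    obtain ⟨c, hc, hcle⟩ := h r hr σ (satC_of_satF hcons hsatF)
    rw [hhead] at hc
    rcases headChoice_opn_cases hc hcle with hpa | hpa
    · have hfD : (⟨⟨p, args.map (VTerm.subst σ)⟩, VTerm.subst σ v⟩ : Fact) ∈ D :=
        promote_just_mem hpa
      apply Set.eq_of_subset_of_subset
      · rintro E (rfl | ⟨rfl, -⟩)
        · rfl
        · show _ ∈ ({D} : Set (Set Fact))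
          exact Set.insert_eq_self.mpr hfD
      · rintro E rfl
        exact Or.inl rfl
    · cases hpaD : promote D ⟨p, args.map (VTerm.subst σ)⟩ with
      | just t =>
        rw [hpaD] at hpa
        have htv : t ≠ VTerm.subst σ v := by
          intro hh
          exact (noneOf_le_just_iff.mp hpa) (by rw [hh]; exact rfl)
        have htD : (⟨⟨p, args.map (VTerm.subst σ)⟩, t⟩ : Fact) ∈ D := promote_just_mem hpaD
        apply Set.eq_of_subset_of_subset
        · rintro E (rfl | ⟨rfl, hconsE⟩)
          · rfl
          · exfalso
            have h1 : (⟨⟨p, args.map (VTerm.subst σ)⟩, VTerm.subst σ v⟩ : Fact) ∈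
                insert (⟨⟨p, args.map (VTerm.subst σ)⟩, VTerm.subst σ v⟩ : Fact) D :=
              Set.mem_insert _ _
            have h2 : (⟨⟨p, args.map (VTerm.subst σ)⟩, t⟩ : Fact) ∈
                insert (⟨⟨p, args.map (VTerm.subst σ)⟩, VTerm.subst σ v⟩ : Fact) D :=
              Set.mem_insert_of_mem _ htD
            have := hconsE _ h2 _ h1 rfl
            exact htv (congrArg Fact.value this)
        · rintro E rfl
          exact Or.inl rfl
      | noneOf X =>
        exfalso
        have hX : X = ∅ := (promote_noneOf hpaD).1
        rw [hpaD, hX] at hpa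
        have := noneOf_le_noneOf_iff.mp hpa
        exact (this rfl : VTerm.subst σ v ∈ (∅ : Set GTerm))

end Aux7
section Aux8

open Classical

lemma step_mono {P : Program} {E E' : Set Fact} (h : Step P E E') : E ⊆ E' := by
  obtain ⟨S, hev, hmem⟩ := h
  cases hev with
  | triv =>
    rw [Set.mem_singleton_iff.mp hmem]
  | @closed r p args vs σ hr hhead hsatF =>
    obtain ⟨v, hv, rfl, -⟩ := hmem
    exact Set.subset_insert _ _
  | @opn r p args v σ hr hhead hsatF =>
    rcases hmem with rfl | ⟨rfl, -⟩
    · exact subset_rfl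
    · exact Set.subset_insert _ _

/-- Along a step sequence below `D`, all facts are derivable. -/
lemma reach_subset_Der {P : Program} {D : Set Fact} (hcons : Consistent D) :
    ∀ E, Relation.ReflTransGen (Step P) ∅ E → E ⊆ D → E ⊆ Der P (promote D) := by
  intro E h
  induction h with
  | refl => intro _ x hx; cases hx
  | @tail b c hab hbc ih =>
    intro hcD
    have hbc' : b ⊆ c := step_mono hbc
    have hbD : b ⊆ D := hbc'.trans hcD
    have hbDer : b ⊆ Der P (promote D) := ih hbD
    obtain ⟨S, hev, hmem⟩ := hbc
    cases hev with
    | triv =>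
      rw [Set.mem_singleton_iff.mp hmem]
      exact hbDer
    | @closed r p args vs σ hr hhead hsatF =>
      obtain ⟨v, hv, rfl, -⟩ := hmem
      intro x hx
      rcases Set.mem_insert_iff.mp hx with rfl | hxb
      · refine mem_Der_step ⟨r, hr, σ, satF_mono hbDer hsatF, ?_⟩ ?_
        · rw [hhead]; exact ⟨v, hv, rfl⟩
        · exact promote_eq_just hcons (hcD hx)
      · exact hbDer hxb
    | @opn r p args v σ hr hhead hsatF =>
      rcases hmem with rfl | ⟨rfl, -⟩
      · exact hbDer
      · intro x hx
        rcases Set.mem_insert_iff.mp hx with rfl | hxb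
        · refine mem_Der_step ⟨r, hr, σ, satF_mono hbDer hsatF, ?_⟩ ?_
          · rw [hhead]; exact rfl
          · exact promote_eq_just hcons (hcD hx)
        · exact hbDer hxb

/-! #### Finite iteration of derivability -/

def DerIter (P : Program) (Δ : CDB) : ℕ → Set Fact
  | 0 => ∅
  | n+1 => DerIter P Δ n ∪ DerStep P Δ (DerIter P Δ n)

lemma DerIter_mono {P : Program} {Δ : CDB} {m n : ℕ} (h : m ≤ n) :
    DerIter P Δ m ⊆ DerIter P Δ n := by
  induction n with
  | zero => cases Nat.le_zero.mp h; exact subset_rfl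
  | succ n ih =>
    rcases Nat.lt_or_ge m (n+1) with hlt | hge
    · exact (ih (Nat.lt_succ_iff.mp hlt)).trans Set.subset_union_left
    · cases Nat.le_antisymm h hge; exact subset_rfl

lemma DerIter_subset_Der {P : Program} {Δ : CDB} : ∀ n, DerIter P Δ n ⊆ Der P Δ := by
  intro n
  induction n with
  | zero => intro x hx; cases hx
  | succ n ih =>
    intro x hx
    rcases hx with hx | hx
    · exact ih hx
    · exact Der_closed (DerStep_mono ih hx)

lemma satF_iUnion {P : Program} {Δ : CDB} {σ : Subst} (F : List VAtom)
    (h : satF σ F (⋃ n, DerIter P Δ n)) : ∃ N, satF σ F (DerIter P Δ N) := by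
  induction F with
  | nil => exact ⟨0, fun A hA => absurd hA List.not_mem_nil⟩
  | cons A F ih =>
    obtain ⟨nA, hnA⟩ := Set.mem_iUnion.mp (h A List.mem_cons_self)
    obtain ⟨N, hN⟩ := ih (fun B hB => h B (List.mem_cons_of_mem _ hB))
    refine ⟨max nA N, fun B hB => ?_⟩
    rcases List.mem_cons.mp hB with rfl | hBF
    · exact DerIter_mono (le_max_left _ _) hnA
    · exact DerIter_mono (le_max_right _ _) (hN B hBF)

lemma Der_subset_iUnion {P : Program} {Δ : CDB} :
    Der P Δ ⊆ ⋃ n, DerIter P Δ n := by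
  apply Der_le
  rintro f ⟨⟨r, hr, σ, hsat, hf⟩, hj⟩
  obtain ⟨N, hN⟩ := satF_iUnion r.prems hsat
  refine Set.mem_iUnion.mpr ⟨N + 1, Or.inr ⟨⟨r, hr, σ, hN, hf⟩, hj⟩⟩

/-! #### Building a step sequence -/

lemma step_insert {P : Program} {D E : Set Fact} (hcons : Consistent D)
    (hE : E ⊆ D) {f : Fact} (hf : f ∈ D)
    (hinst : ∃ r ∈ P, ∃ σ : Subst, satF σ r.prems E ∧ f ∈ headFacts σ r.head) :
    Step P E (insert f E) := by
  obtain ⟨r, hr, σ, hsat, hhf⟩ := hinst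
  have hconsI : Consistent (insert f E) :=
    consistent_subset hcons (Set.insert_subset hf hE)
  cases hhead : r.head with
  | opn p args v =>
    rw [hhead] at hhf
    have hfe : f = ⟨⟨p, args.map (VTerm.subst σ)⟩, v.subst σ⟩ := hhf
    refine ⟨_, Evolve.opn hr hhead hsat, ?_⟩
    right
    exact ⟨by rw [← hfe], hconsI⟩
  | closed p args vs =>
    rw [hhead] at hhf
    obtain ⟨v, hv, hfe⟩ := hhf
    refine ⟨_, Evolve.closed hr hhead hsat, ?_⟩
    exact ⟨v, hv, by rw [← hfe], hconsI⟩

lemma insert_many {P : Program} {D : Set Fact} (hcons : Consistent D) :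
    ∀ F : Finset Fact, ∀ E, Relation.ReflTransGen (Step P) ∅ E → E ⊆ D →
      (∀ f ∈ F, f ∈ D ∧ ∃ r ∈ P, ∃ σ : Subst, satF σ r.prems E ∧ f ∈ headFacts σ r.head) →
      Relation.ReflTransGen (Step P) ∅ (E ∪ ↑F) ∧ E ∪ ↑F ⊆ D := by
  intro F
  induction F using Finset.induction_on with
  | empty =>
    intro E hR hED _
    rw [Finset.coe_empty, Set.union_empty]
    exact ⟨hR, hED⟩
  | @insert a F' ha ih =>
    intro E hR hED hinst
    obtain ⟨haD, hainst⟩ := hinst a (Finset.mem_insert_self _ _)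
    have hstep : Step P E (insert a E) := step_insert hcons hED haD hainst
    have hR' : Relation.ReflTransGen (Step P) ∅ (insert a E) := hR.tail hstep
    have hED' : insert a E ⊆ D := Set.insert_subset haD hED
    have hinst' : ∀ f ∈ F', f ∈ D ∧
        ∃ r ∈ P, ∃ σ : Subst, satF σ r.prems (insert a E) ∧ f ∈ headFacts σ r.head := by
      intro f hf
      obtain ⟨hfD, r, hr, σ, hsat, hhf⟩ := hinst f (Finset.mem_insert_of_mem hf)
      exact ⟨hfD, r, hr, σ, satF_mono (Set.subset_insert _ _) hsat, hhf⟩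
    obtain ⟨hR'', hsub''⟩ := ih (insert a E) hR' hED' hinst'
    rw [Finset.coe_insert, Set.union_insert, ← Set.insert_union]
    exact ⟨hR'', hsub''⟩

lemma reach_of_grounded {P : Program} {D : Set Fact} (hcons : Consistent D)
    (hfin : D.Finite) (hD : D ⊆ Der P (promote D)) :
    Relation.ReflTransGen (Step P) ∅ D := by
  -- find a uniform stage
  have hstage : ∀ f : Fact, f ∈ D → ∃ n, f ∈ DerIter P (promote D) n := by
    intro f hf
    exact Set.mem_iUnion.mp (Der_subset_iUnion (hD hf))
  choose! g hg using hstage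
  obtain ⟨N, hN⟩ : ∃ N, ∀ f ∈ D, f ∈ DerIter P (promote D) N := by
    refine ⟨hfin.toFinset.sup g, fun f hf => ?_⟩
    exact DerIter_mono (Finset.le_sup (hfin.mem_toFinset.mpr hf)) (hg f hf)
  -- build the sequence stage by stage
  have main : ∀ n, ∃ E, Relation.ReflTransGen (Step P) ∅ E ∧
      D ∩ DerIter P (promote D) n ⊆ E ∧ E ⊆ D := by
    intro n
    induction n with
    | zero =>
      refine ⟨∅, Relation.ReflTransGen.refl, ?_, Set.empty_subset D⟩
      rintro x ⟨-, hx⟩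
      cases hx
    | succ n ih =>
      obtain ⟨E, hR, hsub, hED⟩ := ih
      have hFfin : ((D ∩ DerIter P (promote D) (n+1)) \ E).Finite :=
        hfin.subset (fun x hx => hx.1.1)
      have hinst : ∀ f ∈ (D ∩ DerIter P (promote D) (n+1)) \ E, f ∈ D ∧
          ∃ r ∈ P, ∃ σ : Subst, satF σ r.prems E ∧ f ∈ headFacts σ r.head := by
        rintro f ⟨⟨hfD, hfI⟩, hfE⟩
        refine ⟨hfD, ?_⟩
        rcases hfI with hfI | hfI
        · exact absurd (hsub ⟨hfD, hfI⟩) hfE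
        · obtain ⟨⟨r, hr, σ, hsat, hhf⟩, hj⟩ := hfI
          refine ⟨r, hr, σ, ?_, hhf⟩
          intro A hA
          have hADer : A.subst σ ∈ DerIter P (promote D) n := hsat A hA
          have hAD : A.subst σ ∈ D := by
            have := Der_subset_just (DerIter_subset_Der n hADer)
            exact promote_just_mem this
          exact hsub ⟨hAD, hADer⟩
      obtain ⟨hR', hsub'⟩ := insert_many hcons hFfin.toFinset E hR hED
        (fun f hf => hinst f (hFfin.mem_toFinset.mp hf))
      rw [hFfin.coe_toFinset] at hR' hsub'
      refine ⟨E ∪ (D ∩ DerIter P (promote D) (n+1)) \ E, hR', ?_, hsub'⟩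
      intro x hx
      by_cases hxE : x ∈ E
      · exact Or.inl hxE
      · exact Or.inr ⟨hx, hxE⟩
  obtain ⟨E, hR, hsub, hED⟩ := main N
  have : E = D := Set.eq_of_subset_of_subset hED (fun x hx => hsub ⟨hx, hN x hx⟩)
  rw [← this]
  exact hR

lemma promote_cdbfinite {D : Set Fact} (hfin : D.Finite) : CDBFinite (promote D) := by
  constructor
  · apply Set.Finite.subset (hfin.image Fact.attr)
    intro a ha
    simp only [Set.mem_setOf_eq] at ha
    by_cases h : ∃ v, (⟨a, v⟩ : Fact) ∈ D
    · exact ⟨⟨a, h.choose⟩, h.choose_spec, rfl⟩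
    · exfalso
      apply ha
      unfold promote
      rw [dif_neg h]
  · intro a X h
    rw [(promote_noneOf h).1]
    exact Set.finite_empty

end Aux8
/-- Agreement of the step semantics and the least-fixed-point semantics:
a finite consistent fact set `D` is a solution of `P` iff its promotion belongs
to `lfp T_P*` and is finite. -/
theorem solution_iff_in_lfp (P : Program) (hP : Program.WFP P) (D : Set Fact)
    (hcons : Consistent D) (hfin : D.Finite) :
    (Relation.ReflTransGen (Step P) ∅ D ∧ Saturated P D) ↔
      (promote D ∈ lfpTPs P ∧ CDBFinite (promote D)) := by
  rw [lfpTPs_eq_canon]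
  constructor
  · rintro ⟨hreach, hsat⟩
    refine ⟨⟨satCP_of_saturated hcons hsat, ?_, ?_⟩, promote_cdbfinite hfin⟩
    · intro a v h
      exact reach_subset_Der hcons D hreach subset_rfl (promote_just_mem h)
    · intro a X h t ht
      rw [(promote_noneOf h).1] at ht
      cases ht
  · rintro ⟨⟨hS, hG, hE⟩, -⟩
    refine ⟨reach_of_grounded hcons hfin ?_, saturated_of_satCP hcons hS⟩
    intro f hf
    have hj : promote D f.attr = .just f.value := promote_eq_just hcons (by exact hf)
    exact hG f.attr f.value hj

end FCLP
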